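/- Mean strain error, case h₀ > 1: in the linearized 1D model, the relative mean strain error |Σ_ℓ(u_ℓ^{scb} - u_ℓ^a)| / |Σ_ℓ u_ℓ^a| equals 2(1 - 1/h₀)e^{-α} + O(e^{-2α}) as α → ∞. -/

import Mathlib

/-!
Write s = e^{-α}. Since φ''(1) + 2φ''(2) > 0, the quadratic says λ = μ(1 + λ²) with
μ = -φ''(2)/(φ''(1) + 2φ''(2)), so λ = μ + O(μ³). The choice of r₀ is exactly
e^{α(r₀-1)}(1 + 2s²) = 1 + 2s, which gives μ = s(1 - 2e^{-α(2-r₀)})/(1 + 2s) = s + O(s²).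
Both displacement profiles sum in closed form, and eliminating φ''(1) through the quadratic turns
the relative mean strain error into a function of h₀ and λ alone,
2λ(h₀ - 1 - h₀λ)/(h₀(1 - λ)² + 2λ) = 2(1 - 1/h₀)λ + O(λ²).
-/

/-- Equilibrium distance parameter of the Morse potential. -/
noncomputable def morseR0 (α : ℝ) : ℝ :=
  1 + (1 / α) * Real.log ((1 + 2 * Real.exp (-α)) / (1 + 2 * Real.exp (-2 * α)))

/-- The (shifted) Morse potential with stiffness α and shift φ₀. -/
noncomputable def morse (α φ₀ : ℝ) (r : ℝ) : ℝ :=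
  Real.exp (-2 * α * (r - morseR0 α)) - 2 * Real.exp (-α * (r - morseR0 α)) - φ₀

open Real Set

-- The displacements `u^a_ℓ` and `u^scb_ℓ`, with `a = φ''(1)`, `b = φ''(2)`, `c = φ'(2)`.
noncomputable def atomisticDispl (a b c lam : ℝ) (ℓ : ℕ) : ℝ :=
  c * lam ^ ℓ / (a + b * (1 + lam))

noncomputable def scbDispl (a b c : ℝ) (h₀ ℓ : ℕ) : ℝ :=
  if ℓ < h₀ then c / ((h₀ : ℝ) * a + (4 * (h₀ : ℝ) - 2) * b) else 0

noncomputable def strainErrorRatio (H lam : ℝ) : ℝ :=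
  2 * lam * (H - 1 - H * lam) / (H * (1 - lam) ^ 2 + 2 * lam)

section Displacements

variable {a b c lam : ℝ}

lemma hasSum_atomisticDispl (hlam : lam ∈ Ioo 0 1) :
    HasSum (atomisticDispl a b c lam) (c / (a + b * (1 + lam)) / (1 - lam)) := by
  have h : atomisticDispl a b c lam = fun ℓ => c / (a + b * (1 + lam)) * lam ^ ℓ := by
    funext ℓ
    exact mul_div_right_comm c _ _
  rw [h, div_eq_mul_inv (c / _)]
  exact (hasSum_geometric_of_lt_one hlam.1.le hlam.2).mul_left _

lemma hasSum_scbDispl (h₀ : ℕ) :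
    HasSum (scbDispl a b c h₀) (h₀ * (c / ((h₀ : ℝ) * a + (4 * (h₀ : ℝ) - 2) * b))) := by
  have h : HasSum (scbDispl a b c h₀) (∑ ℓ ∈ Finset.range h₀, scbDispl a b c h₀ ℓ) :=
    hasSum_sum_of_ne_finset_zero fun ℓ hℓ => if_neg (by simpa using hℓ)
  rwa [Finset.sum_eq_card_nsmul (f := scbDispl a b c h₀) fun ℓ hℓ =>
    if_pos (Finset.mem_range.mp hℓ), Finset.card_range, nsmul_eq_mul] at h

lemma tsum_sub_div_tsum_atomisticDispl (hb : b ≠ 0) (hc : c ≠ 0) (hlam : lam ∈ Ioo 0 1)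
    (hq : b * lam ^ 2 + (a + 2 * b) * lam + b = 0) (h₀ : ℕ) :
    (∑' ℓ, (scbDispl a b c h₀ ℓ - atomisticDispl a b c lam ℓ))
        / ∑' ℓ, atomisticDispl a b c lam ℓ = strainErrorRatio h₀ lam := by
  obtain ⟨hlam0, hlam1⟩ := hlam
  have hP : 0 < (h₀ : ℝ) * (1 - lam) ^ 2 + 2 * lam := by positivity
  have hat : a + b * (1 + lam) = -b * (1 + lam) / lam := by
    field_simp; linear_combination hq
  have hscb : (h₀ : ℝ) * a + (4 * (h₀ : ℝ) - 2) * b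
      = -b * ((h₀ : ℝ) * (1 - lam) ^ 2 + 2 * lam) / lam := by
    field_simp; linear_combination (h₀ : ℝ) * hq
  rw [((hasSum_scbDispl h₀).sub (hasSum_atomisticDispl ⟨hlam0, hlam1⟩)).tsum_eq,
    (hasSum_atomisticDispl ⟨hlam0, hlam1⟩).tsum_eq, hat, hscb, strainErrorRatio]
  have h1lam : 1 - lam ≠ 0 := by linarith
  field_simp
  ring

end Displacements

lemma abs_strainErrorRatio_sub_le {H lam : ℝ} (hH : 1 ≤ H) (h0 : 0 < lam) (h1 : lam ≤ 1 / 2) :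
    |strainErrorRatio H lam - 2 * (1 - 1 / H) * lam| ≤ 16 * lam ^ 2 := by
  have hP : H / 4 ≤ H * (1 - lam) ^ 2 + 2 * lam := by
    have : 1 / 4 ≤ (1 - lam) ^ 2 := by nlinarith
    nlinarith
  have hHP : 0 < H * (H * (1 - lam) ^ 2 + 2 * lam) := by positivity
  have hkey : strainErrorRatio H lam - 2 * (1 - 1 / H) * lam
      = 2 * lam ^ 2 * (2 * (H - 1) ^ 2 - H ^ 2 - (H - 1) * H * lam)
        / (H * (H * (1 - lam) ^ 2 + 2 * lam)) := by
    rw [strainErrorRatio]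
    field_simp
    ring
  have hM : |2 * (H - 1) ^ 2 - H ^ 2 - (H - 1) * H * lam| ≤ 2 * H ^ 2 := by
    rw [abs_le]; constructor <;> nlinarith
  rw [hkey, abs_div, abs_of_pos hHP, div_le_iff₀ hHP, abs_mul, abs_of_nonneg (by positivity)]
  calc 2 * lam ^ 2 * |2 * (H - 1) ^ 2 - H ^ 2 - (H - 1) * H * lam|
      ≤ 2 * lam ^ 2 * (2 * H ^ 2) := by gcongr
    _ = 16 * lam ^ 2 * (H * (H / 4)) := by ring
    _ ≤ 16 * lam ^ 2 * (H * (H * (1 - lam) ^ 2 + 2 * lam)) := by gcongr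

lemma abs_abs_strainErrorRatio_sub_le {H lam s : ℝ} (hH : 1 ≤ H) (hs0 : 0 ≤ s) (hs : s ≤ 1 / 10)
    (hlam0 : 0 < lam) (hlam : |lam - s| ≤ 6 * s ^ 2) :
    abs (|strainErrorRatio H lam| - 2 * (1 - 1 / H) * s) ≤ 76 * s ^ 2 := by
  have hlam2 : lam ≤ 2 * s := by nlinarith [le_of_abs_le hlam]
  have hH0 : 0 ≤ 1 - 1 / H := by rw [sub_nonneg, div_le_one (by linarith)]; exact hH
  have hH1 : 1 - 1 / H ≤ 1 := by
    have : 0 < 1 / H := by positivity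
    linarith
  calc abs (|strainErrorRatio H lam| - 2 * (1 - 1 / H) * s)
      ≤ |strainErrorRatio H lam - 2 * (1 - 1 / H) * s| := by
        simpa only [abs_of_nonneg (by positivity : (0 : ℝ) ≤ 2 * (1 - 1 / H) * s)] using
          abs_abs_sub_abs_le_abs_sub (strainErrorRatio H lam) (2 * (1 - 1 / H) * s)
    _ ≤ |strainErrorRatio H lam - 2 * (1 - 1 / H) * lam| + |2 * (1 - 1 / H) * (lam - s)| := by
        rw [mul_sub (2 * (1 - 1 / H)) lam s]; exact abs_sub_le _ (2 * (1 - 1 / H) * lam) _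
    _ ≤ 16 * lam ^ 2 + 2 * (6 * s ^ 2) := by
        refine add_le_add (abs_strainErrorRatio_sub_le hH hlam0 (by linarith)) ?_
        rw [abs_mul, abs_of_nonneg (by positivity : (0 : ℝ) ≤ 2 * (1 - 1 / H))]
        exact mul_le_mul (by linarith) hlam (abs_nonneg _) zero_le_two
    _ ≤ 76 * s ^ 2 := by nlinarith

lemma abs_sub_neg_div_le_of_quadratic {b d lam : ℝ} (hd : 0 < d) (hb : b ≤ 0)
    (hlam : lam ∈ Ioo 0 1) (hq : b * lam ^ 2 + d * lam + b = 0) :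
    |lam - -b / d| ≤ 4 * (-b / d) ^ 3 := by
  obtain ⟨hlam0, hlam1⟩ := hlam
  set μ := -b / d with hμ
  have hμ0 : 0 ≤ μ := div_nonneg (neg_nonneg.mpr hb) hd.le
  have hfix : lam - μ = μ * lam ^ 2 := by
    rw [hμ]; field_simp; linear_combination hq
  have hlam2 : lam ≤ 2 * μ := by nlinarith
  rw [hfix, abs_of_nonneg (by positivity)]
  nlinarith [mul_le_mul_of_nonneg_left (pow_le_pow_left₀ hlam0.le hlam2 2) hμ0]

lemma exp_neg_two_mul_mul (α x : ℝ) : exp (-2 * α * x) = exp (-α * x) ^ 2 := by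
  rw [sq, ← exp_add]; ring_nf

lemma exp_neg_two_mul (α : ℝ) : exp (-2 * α) = exp (-α) ^ 2 := by
  simpa using exp_neg_two_mul_mul α 1

lemma hasDerivAt_exp_neg_mul_sub (α r₀ r : ℝ) :
    HasDerivAt (fun r => exp (-α * (r - r₀))) (-α * exp (-α * (r - r₀))) r := by
  have h : HasDerivAt (fun r => -α * (r - r₀)) (-α) r := by
    simpa using ((hasDerivAt_id r).sub_const r₀).const_mul (-α)
  simpa only [mul_comm] using h.exp

section Morse

variable {α : ℝ} (φ₀ : ℝ)

lemma morse_eq : morse α φ₀ = fun r =>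
    exp (-α * (r - morseR0 α)) ^ 2 - 2 * exp (-α * (r - morseR0 α)) - φ₀ := by
  funext r
  rw [morse, exp_neg_two_mul_mul]

lemma deriv_morse (r : ℝ) : deriv (morse α φ₀) r =
    2 * α * (exp (-α * (r - morseR0 α)) - exp (-α * (r - morseR0 α)) ^ 2) := by
  have hE := hasDerivAt_exp_neg_mul_sub α (morseR0 α) r
  rw [morse_eq]
  exact (((hE.pow 2).sub (hE.const_mul 2)).sub_const φ₀).deriv.trans (by ring)

lemma deriv_deriv_morse (r : ℝ) : deriv (deriv (morse α φ₀)) r =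
    2 * α ^ 2 * (2 * exp (-α * (r - morseR0 α)) ^ 2 - exp (-α * (r - morseR0 α))) := by
  have hE := hasDerivAt_exp_neg_mul_sub α (morseR0 α) r
  rw [show deriv (morse α φ₀) = _ from funext (deriv_morse φ₀)]
  exact ((hE.sub (hE.pow 2)).const_mul (2 * α)).deriv.trans (by ring)

lemma exp_neg_mul_one_sub_morseR0_mul (hα : α ≠ 0) :
    exp (-α * (1 - morseR0 α)) * (1 + 2 * exp (-α) ^ 2) = 1 + 2 * exp (-α) := by
  have hlog : -α * (1 - morseR0 α)
      = log ((1 + 2 * exp (-α)) / (1 + 2 * exp (-2 * α))) := by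
    rw [morseR0]; field_simp; ring
  rw [hlog, exp_log (by positivity), exp_neg_two_mul]
  field_simp

lemma exp_neg_mul_two_sub_morseR0 :
    exp (-α * (2 - morseR0 α)) = exp (-α) * exp (-α * (1 - morseR0 α)) := by
  rw [← exp_add]; ring_nf

lemma deriv_deriv_morse_one_add_two_mul (hα : α ≠ 0) :
    deriv (deriv (morse α φ₀)) 1 + 2 * deriv (deriv (morse α φ₀)) 2
      = 2 * α ^ 2 * (1 + 2 * exp (-α)) * exp (-α * (1 - morseR0 α)) := by
  rw [deriv_deriv_morse, deriv_deriv_morse, exp_neg_mul_two_sub_morseR0]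
  linear_combination 4 * α ^ 2 * exp (-α * (1 - morseR0 α)) * exp_neg_mul_one_sub_morseR0_mul hα

lemma neg_deriv_deriv_morse_two_div (hα : α ≠ 0) :
    -deriv (deriv (morse α φ₀)) 2
        / (deriv (deriv (morse α φ₀)) 1 + 2 * deriv (deriv (morse α φ₀)) 2)
      = exp (-α) * (1 - 2 * exp (-α * (2 - morseR0 α))) / (1 + 2 * exp (-α)) := by
  rw [deriv_deriv_morse_one_add_two_mul φ₀ hα, deriv_deriv_morse, exp_neg_mul_two_sub_morseR0]
  field_simp
  ring

lemma exp_neg_le_of_nine_le (hα : 9 ≤ α) : exp (-α) ≤ 1 / 10 := by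
  rw [exp_neg, inv_le_comm₀ (exp_pos α) (by norm_num)]
  linarith [add_one_le_exp α]

lemma exp_neg_mul_two_sub_morseR0_le (hα : α ≠ 0) :
    exp (-α * (2 - morseR0 α)) ≤ exp (-α) * (1 + 2 * exp (-α)) := by
  have hR := exp_neg_mul_one_sub_morseR0_mul hα
  rw [exp_neg_mul_two_sub_morseR0]
  gcongr
  nlinarith [exp_pos (-α * (1 - morseR0 α))]

lemma exp_neg_mul_two_sub_morseR0_le_one_div_eight (hα : 9 ≤ α) :
    exp (-α * (2 - morseR0 α)) ≤ 1 / 8 := by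
  have hs := exp_neg_le_of_nine_le hα
  have ht := exp_neg_mul_two_sub_morseR0_le (α := α) (by linarith)
  nlinarith [exp_pos (-α)]

lemma deriv_deriv_morse_two_neg (hα : 9 ≤ α) : deriv (deriv (morse α φ₀)) 2 < 0 := by
  have ht := exp_neg_mul_two_sub_morseR0_le_one_div_eight hα
  have ht0 := exp_pos (-α * (2 - morseR0 α))
  rw [deriv_deriv_morse]
  exact mul_neg_of_pos_of_neg (by positivity) (by nlinarith)

lemma deriv_morse_two_pos (hα : 9 ≤ α) : 0 < deriv (morse α φ₀) 2 := by
  have ht := exp_neg_mul_two_sub_morseR0_le_one_div_eight hα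
  have ht0 := exp_pos (-α * (2 - morseR0 α))
  rw [deriv_morse]
  exact mul_pos (by linarith) (by nlinarith)

lemma abs_morse_root_sub_le (hα : 9 ≤ α) {lam : ℝ} (hlam : lam ∈ Ioo 0 1)
    (hq : deriv (deriv (morse α φ₀)) 2 * lam ^ 2
      + (deriv (deriv (morse α φ₀)) 1 + 2 * deriv (deriv (morse α φ₀)) 2) * lam
      + deriv (deriv (morse α φ₀)) 2 = 0) :
    |lam - exp (-α)| ≤ 6 * exp (-α) ^ 2 := by
  have hα0 : α ≠ 0 := by linarith
  have hd : 0 < deriv (deriv (morse α φ₀)) 1 + 2 * deriv (deriv (morse α φ₀)) 2 := by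
    rw [deriv_deriv_morse_one_add_two_mul φ₀ hα0]; positivity
  have hroot := abs_sub_neg_div_le_of_quadratic hd (deriv_deriv_morse_two_neg φ₀ hα).le hlam hq
  rw [neg_deriv_deriv_morse_two_div φ₀ hα0] at hroot
  have hs := exp_neg_le_of_nine_le hα
  have ht := exp_neg_mul_two_sub_morseR0_le hα0
  set s := exp (-α)
  set t := exp (-α * (2 - morseR0 α))
  set μ := s * (1 - 2 * t) / (1 + 2 * s)
  have hs0 : 0 < s := exp_pos _
  have ht0 : 0 < t := exp_pos _
  have hμ0 : 0 ≤ μ := div_nonneg (mul_nonneg hs0.le (by nlinarith)) (by positivity)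
  have hsμ : s - μ = 2 * s * (s + t) / (1 + 2 * s) := by simp only [μ]; field_simp; ring
  have hμs : μ ≤ s := by
    have : 0 ≤ s - μ := by rw [hsμ]; positivity
    linarith
  have hsμ_le : s - μ ≤ 5 * s ^ 2 := by
    rw [hsμ, div_le_iff₀ (by positivity)]
    nlinarith
  calc |lam - s| ≤ |lam - μ| + |μ - s| := abs_sub_le _ _ _
    _ ≤ 4 * μ ^ 3 + 5 * s ^ 2 := by
        rw [abs_sub_comm μ, abs_of_nonneg (sub_nonneg.mpr hμs)]
        exact add_le_add hroot hsμ_le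
    _ ≤ 6 * s ^ 2 := by nlinarith [pow_le_pow_left₀ hμ0 hμs 3]

end Morse

/-- mean strain error for h₀ > 1:
|Σ(u^scb - u^a)|/|Σ u^a| = 2(1 - 1/h₀)e^{-α} + O(e^{-2α}) as α → ∞. -/
theorem stmt_13 (φ₀ : ℝ) (h₀ : ℕ) (hh : 1 < h₀) :
    ∃ C α₀ : ℝ, 0 < C ∧ 0 < α₀ ∧ ∀ α : ℝ, α₀ ≤ α →
      ∀ lam : ℝ, lam ∈ Set.Ioo (0 : ℝ) 1 →
        (let a : ℝ := deriv (deriv (morse α φ₀)) 1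
         let b : ℝ := deriv (deriv (morse α φ₀)) 2
         let c : ℝ := deriv (morse α φ₀) 2
         b * lam ^ 2 + (a + 2 * b) * lam + b = 0 →
         (let ua : ℕ → ℝ := fun ℓ => c * lam ^ ℓ / (a + b * (1 + lam))
          let uscb : ℕ → ℝ := fun ℓ =>
            if ℓ < h₀ then c / ((h₀ : ℝ) * a + (4 * (h₀ : ℝ) - 2) * b) else 0
          abs (|∑' ℓ : ℕ, (uscb ℓ - ua ℓ)| / |∑' ℓ : ℕ, ua ℓ|
              - 2 * (1 - 1 / (h₀ : ℝ)) * Real.exp (-α)) ≤ C * Real.exp (-2 * α))) := by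
  refine ⟨76, 9, by norm_num, by norm_num, fun α hα lam hlam => ?_⟩
  intro a b c hq ua uscb
  have hratio : (∑' ℓ, (uscb ℓ - ua ℓ)) / ∑' ℓ, ua ℓ = strainErrorRatio h₀ lam :=
    tsum_sub_div_tsum_atomisticDispl (deriv_deriv_morse_two_neg φ₀ hα).ne
      (deriv_morse_two_pos φ₀ hα).ne' hlam hq h₀
  rw [← abs_div, hratio, exp_neg_two_mul]
  exact abs_abs_strainErrorRatio_sub_le (by exact_mod_cast hh.le) (exp_pos _).le
    (exp_neg_le_of_nine_le hα) hlam.1 (abs_morse_root_sub_le φ₀ hα hlam hq)
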